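/- Let x and m be natural numbers and define the sequence (a_n) by a_n = [x+n choose m]_q q^{-mn}. Then its q-dual sequence satisfies: a*_n = (-1)^n [x choose m-n]_q q^{-mn + n(n-1)/2} if n ≤ m, and a*_n = 0 if n > m. That is, Σ_{i=0}^n (-1)^i [n choose i]_q [x+i choose m]_q q^{i(i-1)/2 - im} = (-1)^n [x choose m-n]_q q^{-mn + n(n-1)/2} for n ≤ m, and the sum is 0 for n > m. -/
import Mathlib


open Finset

/-- The q-Pochhammer symbol `(a;q)_n = ∏_{j=0}^{n-1} (1 - a q^j)`. -/
def qPoch {F : Type*} [Field F] (q a : F) (n : ℕ) : F :=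
  ∏ j ∈ Finset.range n, (1 - a * q ^ j)

/-- The q-binomial coefficient `[n choose i]_q`, equal to 0 when `i > n`. -/
def qBinom {F : Type*} [Field F] (q : F) (n i : ℕ) : F :=
  if i ≤ n then qPoch q q n / (qPoch q q i * qPoch q q (n - i)) else 0

/-- The q-integer `[n]_q = (1-q^n)/(1-q)`. -/
def qInt {F : Type*} [Field F] (q : F) (n : ℕ) : F := (1 - q ^ n) / (1 - q)

/-- The q-dual sequence `a*_n = ∑_{i=0}^n (-1)^i [n choose i]_q q^{i(i-1)/2} a_i`. -/
def qDual {F : Type*} [Field F] (q : F) (a : ℕ → F) (n : ℕ) : F :=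
  ∑ i ∈ Finset.range (n + 1), (-1 : F) ^ i * qBinom q n i * q ^ (i.choose 2) * a i

section Aux

variable {F : Type*} [Field F] (q : F)

lemma qPoch_succ (a : F) (n : ℕ) : qPoch q a (n + 1) = qPoch q a n * (1 - a * q ^ n) :=
  Finset.prod_range_succ _ _

lemma qPoch_zero (a : F) : qPoch q a 0 = 1 := Finset.prod_range_zero _

variable (hq : ∀ m : ℕ, 0 < m → q ^ m ≠ 1)
include hq

lemma qPoch_ne_zero (n : ℕ) : qPoch q q n ≠ 0 := by
  unfold qPoch
  rw [Finset.prod_ne_zero_iff]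
  intro j _
  have h1 : q * q ^ j = q ^ (j + 1) := by ring
  rw [h1]
  intro h
  exact hq (j + 1) (Nat.succ_pos j) (sub_eq_zero.mp h).symm

lemma qBinom_zero_right (n : ℕ) : qBinom q n 0 = 1 := by
  unfold qBinom
  rw [if_pos (Nat.zero_le n), qPoch_zero, Nat.sub_zero, one_mul,
    div_self (qPoch_ne_zero q hq n)]

lemma qBinom_self (n : ℕ) : qBinom q n n = 1 := by
  unfold qBinom
  rw [if_pos le_rfl, Nat.sub_self, qPoch_zero, mul_one,
    div_self (qPoch_ne_zero q hq n)]

set_option linter.unusedSectionVars false in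
lemma qBinom_of_gt {n i : ℕ} (h : n < i) : qBinom q n i = 0 := by
  unfold qBinom
  rw [if_neg (by omega)]

lemma qPascal (n i : ℕ) :
    qBinom q (n + 1) (i + 1) = q ^ (i + 1) * qBinom q n (i + 1) + qBinom q n i := by
  rcases lt_trichotomy n i with h | rfl | h
  · rw [qBinom_of_gt q hq (by omega), qBinom_of_gt q hq (by omega),
      qBinom_of_gt q hq h, mul_zero, zero_add]
  · rw [qBinom_self q hq, qBinom_self q hq, qBinom_of_gt q hq (by omega), mul_zero, zero_add]
  · obtain ⟨k, rfl⟩ : ∃ k, n = i + 1 + k := ⟨n - i - 1, by omega⟩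
    unfold qBinom
    rw [if_pos (by omega), if_pos (by omega), if_pos (by omega)]
    have e1 : i + 1 + k + 1 - (i + 1) = k + 1 := by omega
    have e2 : i + 1 + k - (i + 1) = k := by omega
    have e3 : i + 1 + k - i = k + 1 := by omega
    rw [e1, e2, e3]
    have hP : ∀ j : ℕ, qPoch q q j ≠ 0 := qPoch_ne_zero q hq
    have hi1 : qPoch q q (i + 1) = qPoch q q i * (1 - q * q ^ i) := qPoch_succ q q i
    have hk1 : qPoch q q (k + 1) = qPoch q q k * (1 - q * q ^ k) := qPoch_succ q q k
    have hn1 : qPoch q q (i + 1 + k + 1) = qPoch q q (i + 1 + k) * (1 - q * q ^ (i + 1 + k)) :=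
      qPoch_succ q q (i + 1 + k)
    have h1 : (1 : F) - q * q ^ i ≠ 0 := by
      intro h
      exact hq (i + 1) (Nat.succ_pos i) (by rw [pow_succ, mul_comm]; exact (sub_eq_zero.mp h).symm)
    have h2 : (1 : F) - q * q ^ k ≠ 0 := by
      intro h
      exact hq (k + 1) (Nat.succ_pos k) (by rw [pow_succ, mul_comm]; exact (sub_eq_zero.mp h).symm)
    field_simp [hP (i+1), hP (k+1), hP i, hP k, hP (i+1+k), hP (i+1+k+1)]
    rw [hn1, hi1, hk1]
    ring

lemma qDual_succ (a : ℕ → F) (n : ℕ) :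
    qDual q a (n + 1) =
      ∑ i ∈ Finset.range (n + 1),
        (-1 : F) ^ i * qBinom q n i * q ^ (i.choose 2) * (q ^ i * (a i - a (i + 1))) := by
  unfold qDual
  rw [Finset.sum_range_succ' (fun i => (-1 : F) ^ i * qBinom q (n + 1) i * q ^ (i.choose 2) * a i) (n + 1)]
  have hpascal : ∀ i : ℕ,
      (-1 : F) ^ (i + 1) * qBinom q (n + 1) (i + 1) * q ^ ((i + 1).choose 2) * a (i + 1) =
        (-1) ^ (i + 1) * (q ^ (i + 1) * qBinom q n (i + 1)) * q ^ ((i + 1).choose 2) * a (i + 1)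
        + (-1) ^ (i + 1) * qBinom q n i * q ^ ((i + 1).choose 2) * a (i + 1) := by
    intro i
    rw [qPascal q hq n i]
    ring
  rw [Finset.sum_congr rfl (fun i _ => hpascal i), Finset.sum_add_distrib]
  have hA : ∑ i ∈ Finset.range (n + 1),
      (-1 : F) ^ (i + 1) * (q ^ (i + 1) * qBinom q n (i + 1)) * q ^ ((i + 1).choose 2) * a (i + 1)
      + (-1 : F) ^ 0 * qBinom q (n + 1) 0 * q ^ (Nat.choose 0 2) * a 0
      = ∑ i ∈ Finset.range (n + 1), (-1 : F) ^ i * qBinom q n i * q ^ (i.choose 2) * (q ^ i * a i) := by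
    rw [Finset.sum_range_succ' (fun i => (-1 : F) ^ i * qBinom q n i * q ^ (i.choose 2) * (q ^ i * a i)) n]
    congr 1
    · rw [Finset.sum_range_succ, qBinom_of_gt q hq (Nat.lt_succ_self n)]
      simp only [mul_zero, zero_mul, add_zero]
      apply Finset.sum_congr rfl
      intro i _
      have hc : (i + 1).choose 2 = i.choose 2 + i := by
        rw [Nat.choose_succ_succ, Nat.choose_one_right, Nat.add_comm]
      rw [hc, pow_add]
      ring
    · simp [qBinom_zero_right q hq]
  have hB : ∀ i : ℕ, (-1 : F) ^ (i + 1) * qBinom q n i * q ^ ((i + 1).choose 2) * a (i + 1)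
      = -((-1 : F) ^ i * qBinom q n i * q ^ (i.choose 2) * (q ^ i * a (i + 1))) := by
    intro i
    have hc : (i + 1).choose 2 = i.choose 2 + i := by
      rw [Nat.choose_succ_succ, Nat.choose_one_right, Nat.add_comm]
    rw [hc, pow_add, pow_succ]
    ring
  rw [add_right_comm, hA, Finset.sum_congr rfl (fun i _ => hB i), Finset.sum_neg_distrib,
    ← sub_eq_add_neg, ← Finset.sum_sub_distrib]
  apply Finset.sum_congr rfl
  intro i _
  ring


lemma key (hq0 : q ≠ 0) (x : ℕ) :
    ∀ n m : ℕ, qDual q (fun i => qBinom q (x + i) m * q ^ (-(m : ℤ) * (i : ℤ))) n =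
      if n ≤ m then
        (-1 : F) ^ n * qBinom q x (m - n) * q ^ (-(m : ℤ) * (n : ℤ) + (n.choose 2 : ℤ))
      else 0 := by
  intro n
  induction n with
  | zero =>
    intro m
    rw [if_pos (Nat.zero_le m)]
    unfold qDual
    simp [qBinom_zero_right q hq, qBinom_self q hq]
  | succ n ih =>
    intro m
    rw [qDual_succ q hq]
    match m with
    | 0 =>
      rw [if_neg (by omega)]
      apply Finset.sum_eq_zero
      intro i _
      simp [qBinom_zero_right q hq]
    | m' + 1 =>
      have hc : ∀ i : ℕ,
          q ^ i * ((fun i => qBinom q (x + i) (m' + 1) * q ^ (-((m' : ℤ) + 1) * (i : ℤ))) i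
            - (fun i => qBinom q (x + i) (m' + 1) * q ^ (-((m' : ℤ) + 1) * (i : ℤ))) (i + 1))
          = -(q ^ (-((m' : ℤ) + 1))) * (qBinom q (x + i) m' * q ^ (-(m' : ℤ) * (i : ℤ))) := by
        intro i
        simp only
        have hx1 : x + (i + 1) = (x + i) + 1 := by omega
        rw [hx1, qPascal q hq (x + i) m']
        have hz1 : (q : F) ^ (-((m' : ℤ) + 1) * ((i : ℤ) + 1))
            = q ^ (-((m' : ℤ) + 1) * (i : ℤ)) * q ^ (-((m' : ℤ) + 1)) := by
          rw [← zpow_add₀ hq0]; ring_nf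
        have hz2 : (q : F) ^ ((m' : ℤ) + 1) * q ^ (-((m' : ℤ) + 1)) = 1 := by
          have he : (m' : ℤ) + 1 + -((m' : ℤ) + 1) = 0 := by ring
          rw [← zpow_add₀ hq0, he, zpow_zero]
        have hz3 : (q : F) ^ (i : ℤ) * q ^ (-((m' : ℤ) + 1) * (i : ℤ))
            = q ^ (-(m' : ℤ) * (i : ℤ)) := by
          rw [← zpow_add₀ hq0]; ring_nf
        have hz4 : (q : F) ^ (m' + 1) = q ^ ((m' : ℤ) + 1) := by
          rw [← zpow_natCast]; norm_num
        push_cast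
        rw [hz1, hz4]
        calc q ^ (i : ℕ) * (qBinom q (x + i) (m' + 1) * q ^ (-((m' : ℤ) + 1) * (i : ℤ))
              - (q ^ ((m' : ℤ) + 1) * qBinom q (x + i) (m' + 1) + qBinom q (x + i) m')
                * (q ^ (-((m' : ℤ) + 1) * (i : ℤ)) * q ^ (-((m' : ℤ) + 1))))
            = q ^ (i : ℕ) * qBinom q (x + i) (m' + 1) * q ^ (-((m' : ℤ) + 1) * (i : ℤ))
                * (1 - q ^ ((m' : ℤ) + 1) * q ^ (-((m' : ℤ) + 1)))
              - q ^ (i : ℕ) * qBinom q (x + i) m'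
                * (q ^ (-((m' : ℤ) + 1) * (i : ℤ)) * q ^ (-((m' : ℤ) + 1))) := by ring
          _ = -(q ^ (-((m' : ℤ) + 1))) * (qBinom q (x + i) m' * q ^ (-(m' : ℤ) * (i : ℤ))) := by
              rw [hz2]
              have : (q : F) ^ (i : ℕ) = q ^ (i : ℤ) := by
                rw [← zpow_natCast]
              rw [this, sub_self, mul_zero, zero_sub]
              rw [show (q:F) ^ (i:ℤ) * qBinom q (x + i) m'
                  * (q ^ (-((m' : ℤ) + 1) * (i : ℤ)) * q ^ (-((m' : ℤ) + 1)))
                  = (q ^ (i:ℤ) * q ^ (-((m' : ℤ) + 1) * (i : ℤ))) * qBinom q (x + i) m'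
                    * q ^ (-((m' : ℤ) + 1)) from by ring, hz3]
              ring
      have hsum : ∑ i ∈ Finset.range (n + 1),
          (-1 : F) ^ i * qBinom q n i * q ^ (i.choose 2) *
            (q ^ i * ((fun i => qBinom q (x + i) (m' + 1) * q ^ (-((m' : ℤ) + 1) * (i : ℤ))) i
              - (fun i => qBinom q (x + i) (m' + 1) * q ^ (-((m' : ℤ) + 1) * (i : ℤ))) (i + 1)))
          = -(q ^ (-((m' : ℤ) + 1))) *
            ∑ i ∈ Finset.range (n + 1),
              (-1 : F) ^ i * qBinom q n i * q ^ (i.choose 2) *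
                (qBinom q (x + i) m' * q ^ (-(m' : ℤ) * (i : ℤ))) := by
        rw [Finset.mul_sum]
        apply Finset.sum_congr rfl
        intro i _
        rw [hc i]
        ring
      have hcast : ∀ i : ℕ, (-((m' : ℤ) + 1) : ℤ) = -(((m' + 1 : ℕ) : ℤ)) := by
        intro _; push_cast; ring
      simp only [show (-(((m' + 1 : ℕ)) : ℤ)) = -((m' : ℤ) + 1) from by push_cast; ring] at *
      rw [hsum]
      have ihm := ih m'
      unfold qDual at ihm
      rw [ihm]
      by_cases hnm : n ≤ m'
      · rw [if_pos hnm, if_pos (by omega)]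
        have hsub : m' + 1 - (n + 1) = m' - n := by omega
        rw [hsub]
        have hch : (n + 1).choose 2 = n.choose 2 + n := by
          rw [Nat.choose_succ_succ, Nat.choose_one_right, Nat.add_comm]
        rw [hch]
        have hexp : (q : F) ^ (-((m' : ℤ) + 1) * ((n : ℤ) + 1) + ((n.choose 2 + n : ℕ) : ℤ))
            = q ^ (-((m' : ℤ) + 1)) * q ^ (-(m' : ℤ) * (n : ℤ) + ((n.choose 2 : ℕ) : ℤ)) := by
          rw [← zpow_add₀ hq0]
          congr 1
          push_cast
          ring
        push_cast at hexp ⊢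
        rw [hexp]
        ring
      · rw [if_neg hnm, if_neg (by omega), mul_zero]

end Aux

theorem stmt19 {F : Type*} [Field F] (q : F) (hq0 : q ≠ 0)
    (hq : ∀ m : ℕ, 0 < m → q ^ m ≠ 1) (x m : ℕ) (a : ℕ → F)
    (ha : ∀ n : ℕ, a n = qBinom q (x + n) m * q ^ (-(m : ℤ) * (n : ℤ))) :
    ∀ n : ℕ, qDual q a n =
      if n ≤ m then
        (-1 : F) ^ n * qBinom q x (m - n) * q ^ (-(m : ℤ) * (n : ℤ) + (n.choose 2 : ℤ))
      else 0 := by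
  intro n
  have haf : a = fun i => qBinom q (x + i) m * q ^ (-(m : ℤ) * (i : ℤ)) := funext ha
  rw [haf]
  exact key q hq hq0 x n m
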